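/- With the setup of the execution-risk recursion: \Delta \in [0,1], r_0 \in [0,1), weights w^j \geq 0 summing to 1, child risks e^j \in [0,1], and additionally lower bounds r^j \in [0,1] with r^j \leq e^j for all j. If r_0 + (1-r_0)\sum_j w^j e^j \leq \Delta, then for every i with w^i > 0: r^i \leq (1/w^i)\big( (\Delta - r_0)/(1-r_0) - \sum_{j\neq i} w^j r^j \big). -/
import Mathlib

theorem stmt_12 (m : ℕ) (Δ r0 : ℝ) (hΔ0 : 0 ≤ Δ) (hΔ1 : Δ ≤ 1)
    (hr0 : 0 ≤ r0) (hr1 : r0 < 1)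
    (w e r : Fin m → ℝ) (hw0 : ∀ j, 0 ≤ w j) (hw1 : ∑ j, w j = 1)
    (he : ∀ j, 0 ≤ e j ∧ e j ≤ 1) (hr : ∀ j, 0 ≤ r j ∧ r j ≤ 1)
    (hre : ∀ j, r j ≤ e j)
    (h : r0 + (1 - r0) * ∑ j, w j * e j ≤ Δ) :
    ∀ i, 0 < w i →
      r i ≤ (1 / w i) * ((Δ - r0) / (1 - r0) - ∑ j ∈ Finset.univ.erase i, w j * r j) := by
  intro i hi
  have h1 : (0:ℝ) < 1 - r0 := by linarith
  have hse : ∑ j, w j * e j ≤ (Δ - r0) / (1 - r0) := by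
    rw [le_div_iff₀ h1]; linarith [h]
  have hsr : ∑ j, w j * r j ≤ ∑ j, w j * e j :=
    Finset.sum_le_sum fun j _ => mul_le_mul_of_nonneg_left (hre j) (hw0 j)
  have hsplit : ∑ j, w j * r j = w i * r i + ∑ j ∈ Finset.univ.erase i, w j * r j :=
    (Finset.add_sum_erase _ _ (Finset.mem_univ i)).symm
  rw [one_div, ← div_eq_inv_mul, le_div_iff₀ hi]
  nlinarith [hsplit, hse, hsr]
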